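/- arXiv:math/9209206 — 5 statements merged into one kernel-verified Lean document; each statement's English description precedes it below -/
import Mathlib

section
/- The Amoeba partial order 𝔸 has (ω₁,ω)-caliber. Concretely: for every uncountable set T of open subsets of Cantor space 2^ω, each of Lebesgue (uniform product) measure strictly less than 1/2, there exists a countably infinite subset F ⊆ T such that μ(⋃F) < 1/2 (i.e. F has a common lower bound in 𝔸). -/
open MeasureTheory

noncomputable section

/-- The binary-digit map sending `r ∈ [0,1)` to its sequence of binary digits,
so `binDigits r n` is the `n`-th binary digit of `r`. -/
def binDigits (r : ℝ) : ℕ → Bool := fun n => decide (⌊r * 2 ^ (n + 1)⌋ % 2 = 1)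

/-- The uniform product ("coin-flipping") probability measure `μ` on Cantor space `2^ω`,
realized as the pushforward of Lebesgue measure on `[0,1)` under the binary-digit map. -/
def μC : Measure (ℕ → Bool) := (volume.restrict (Set.Ico (0 : ℝ) 1)).map binDigits

/-- The basic clopen cylinder `[σ]` determined by a finite binary string `σ`. -/
def cyl (σ : List Bool) : Set (ℕ → Bool) :=
  {f | ∀ i : ℕ, ∀ h : i < σ.length, f i = σ.get ⟨i, h⟩}

/-! Uncountably many members of `T` have measure below one rational `q < 1/2`; fix errors
`δ k > 0` with `q + ∑ δ k < 1/2`. An open set is approximated from inside, up to `δ k`, by a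
finite union of basic open sets, and there are only countably many of these, so uncountably many
members of an uncountable family share the same approximation `U`. Recursively pick `A k` with
approximation `U k` and continue inside the uncountable subfamily of sets containing `U k`. Then
`U j ⊆ A k` for `j ≤ k`, so `⋃ U k` is an increasing union of sets of measure `< q`, and
`⋃ A k ⊆ ⋃ U k ∪ ⋃ (A k \ U k)` has measure at most `q + ∑ δ k < 1/2`. -/

open TopologicalSpace Set Function
open scoped ENNReal

theorem exists_not_countable_inter_of_subset_iUnion {α ι : Type*} [Countable ι] {s : Set α}
    {t : ι → Set α} (hst : s ⊆ ⋃ i, t i) (hs : ¬ s.Countable) :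
    ∃ i, ¬ (s ∩ t i).Countable := by
  by_contra! h
  refine hs ((countable_iUnion h).mono ?_)
  rw [← inter_iUnion]
  exact subset_inter subset_rfl hst

theorem exists_injective_seq_of_not_countable {α β : Type*} {T : Set α} (hT : ¬ T.Countable)
    (P : ℕ → α → β → Prop) (Q : β → α → Prop)
    (step : ∀ k, ∀ S ⊆ T, ¬ S.Countable → ∃ a ∈ S, ∃ b, P k a b ∧ ¬ {x ∈ S | Q b x}.Countable) :
    ∃ (a : ℕ → α) (b : ℕ → β), Injective a ∧ (∀ k, a k ∈ T ∧ P k (a k) (b k)) ∧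
      ∀ j k, j < k → Q (b j) (a k) := by
  choose a ha b hP hQ using
    fun k (S : {S : Set α // S ⊆ T ∧ ¬ S.Countable}) => step k S.1 S.2.1 S.2.2
  let next (k : ℕ) (S : {S : Set α // S ⊆ T ∧ ¬ S.Countable}) :
      {S : Set α // S ⊆ T ∧ ¬ S.Countable} :=
    ⟨{x ∈ S.1 | Q (b k S) x} \ {a k S}, fun _ hx => S.2.1 hx.1.1,
      fun h => hQ k S ((h.insert _).mono (subset_insert_sdiff_singleton _ _))⟩
  let S (k : ℕ) : {S : Set α // S ⊆ T ∧ ¬ S.Countable} := Nat.rec ⟨T, subset_rfl, hT⟩ next k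
  have hS : Antitone fun k => (S k).1 := antitone_nat_of_succ_le fun k _ hx => hx.1.1
  have hlater (j k : ℕ) (hjk : j < k) : a k (S k) ∈ (next j (S j)).1 := hS hjk (ha k (S k))
  refine ⟨fun k => a k (S k), fun k => b k (S k), Injective.of_lt_imp_ne fun j k hjk h => ?_,
    fun k => ⟨(S k).2.1 (ha k _), hP k _⟩, fun j k hjk => (hlater j k hjk).1.2⟩
  exact (hlater j k hjk).2 h.symm

theorem measure_iUnion_le_iSup_add_tsum_sdiff {α : Type*} [MeasurableSpace α] (μ : Measure α)
    {A U : ℕ → Set α} (hUA : ∀ j k, j ≤ k → U j ⊆ A k) :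
    μ (⋃ k, A k) ≤ (⨆ k, μ (A k)) + ∑' k, μ (A k \ U k) := by
  have hcover : ⋃ k, A k ⊆ (⋃ k, U k) ∪ ⋃ k, (A k \ U k) :=
    iUnion_subset fun k => (sdiff_subset_iff.1 subset_rfl).trans
      (union_subset_union (subset_iUnion U k) (subset_iUnion (fun k => A k \ U k) k))
  have hU : μ (⋃ k, U k) ≤ ⨆ k, μ (A k) := by
    rw [measure_iUnion_eq_iSup_accumulate]
    exact iSup_mono fun N => measure_mono (iUnion₂_subset fun j hj => hUA j N hj)
  calc μ (⋃ k, A k) ≤ μ (⋃ k, U k) + μ (⋃ k, (A k \ U k)) :=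
        (measure_mono hcover).trans (measure_union_le _ _)
    _ ≤ _ := add_le_add hU (measure_iUnion_le _)

section SecondCountable

variable {X : Type*} [TopologicalSpace X] [SecondCountableTopology X] [MeasurableSpace X]
  [OpensMeasurableSpace X] (μ : Measure X)

theorem IsOpen.exists_finite_subset_countableBasis_measure_sdiff_lt {A : Set X} (hA : IsOpen A)
    (hμA : μ A ≠ ∞) {δ : ℝ≥0∞} (hδ : δ ≠ 0) :
    ∃ t ∈ {t : Set (Set X) | t.Finite ∧ t ⊆ countableBasis X}, ⋃₀ t ⊆ A ∧ μ (A \ ⋃₀ t) < δ := by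
  by_cases h0 : μ A = 0
  · exact ⟨∅, ⟨finite_empty, empty_subset _⟩, by simp, by simpa [h0] using pos_iff_ne_zero.2 hδ⟩
  obtain ⟨S, hSB, rfl⟩ := (isBasis_countableBasis X).open_eq_sUnion hA
  let 𝒯 := {t : Set (Set X) | t.Finite ∧ t ⊆ S}
  have hS : ⋃₀ S = ⋃ t ∈ 𝒯, ⋃₀ t := by
    refine (sUnion_subset fun s hs => ?_).antisymm (iUnion₂_subset fun t ht => sUnion_mono ht.2)
    have hs𝒯 : {s} ∈ 𝒯 := ⟨finite_singleton s, singleton_subset_iff.2 hs⟩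
    exact (sUnion_singleton s).ge.trans (subset_biUnion_of_mem (u := fun t => ⋃₀ t) hs𝒯)
  have h𝒯 : DirectedOn ((· ⊆ ·) on fun t : Set (Set X) => ⋃₀ t) 𝒯 := fun t₁ h₁ t₂ h₂ =>
    ⟨t₁ ∪ t₂, ⟨h₁.1.union h₂.1, union_subset h₁.2 h₂.2⟩,
      sUnion_mono subset_union_left, sUnion_mono subset_union_right⟩
  have hsup : μ (⋃₀ S) = ⨆ t ∈ 𝒯, μ (⋃₀ t) := by
    rw [hS]
    exact measure_biUnion_eq_iSup
      (countable_ofPred_finite_subset ((countable_countableBasis X).mono hSB)) h𝒯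
  obtain ⟨t, ht, hlt⟩ : ∃ t ∈ 𝒯, μ (⋃₀ S) - δ < μ (⋃₀ t) :=
    lt_biSup_iff.1 (hsup ▸ ENNReal.sub_lt_self hμA h0 hδ)
  have htS : ⋃₀ t ⊆ ⋃₀ S := sUnion_mono ht.2
  have ht_open : IsOpen (⋃₀ t) :=
    isOpen_sUnion fun s hs => isOpen_of_mem_countableBasis (hSB (ht.2 hs))
  refine ⟨t, ⟨ht.1, ht.2.trans hSB⟩, htS, ?_⟩
  rw [measure_sdiff htS ht_open.nullMeasurableSet (ne_top_of_le_ne_top hμA (measure_mono htS))]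
  exact ENNReal.sub_lt_of_sub_lt (measure_mono htS) (.inl hμA) hlt

theorem exists_mem_measure_sdiff_lt_not_countable_setOf_superset {S : Set (Set X)}
    (hS : ∀ A ∈ S, IsOpen A ∧ μ A ≠ ∞) (hunc : ¬ S.Countable) {δ : ℝ≥0∞} (hδ : δ ≠ 0) :
    ∃ A ∈ S, ∃ U, (U ⊆ A ∧ μ (A \ U) < δ) ∧ ¬ {B ∈ S | U ⊆ B}.Countable := by
  let 𝒟 := {t : Set (Set X) | t.Finite ∧ t ⊆ countableBasis X}
  have : Countable 𝒟 := (countable_ofPred_finite_subset (countable_countableBasis X)).to_subtype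
  have hcover : S ⊆ ⋃ t : 𝒟, {B | ⋃₀ t.1 ⊆ B ∧ μ (B \ ⋃₀ t.1) < δ} := fun A hA => by
    obtain ⟨t, ht, hA⟩ := (hS A hA).1.exists_finite_subset_countableBasis_measure_sdiff_lt μ
      (hS A hA).2 hδ
    exact mem_iUnion.2 ⟨⟨t, ht⟩, hA⟩
  obtain ⟨t, ht⟩ := exists_not_countable_inter_of_subset_iUnion hcover hunc
  obtain ⟨A, hAS, hA⟩ := Set.Infinite.nonempty fun h => ht h.countable
  refine ⟨A, hAS, ⋃₀ t.1, hA, fun h => ht (h.mono fun B hB => ?_)⟩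
  exact ⟨hB.1, hB.2.1⟩

theorem exists_countable_infinite_subset_measure_sUnion_lt {c : ℝ≥0∞} {T : Set (Set X)}
    (hT : ∀ A ∈ T, IsOpen A ∧ μ A < c) (hunc : ¬ T.Countable) :
    ∃ F ⊆ T, F.Countable ∧ F.Infinite ∧ μ (⋃₀ F) < c := by
  have hcover : T ⊆ ⋃ q : ℚ, {A | μ A < Real.toNNReal q ∧ (Real.toNNReal q : ℝ≥0∞) < c} :=
    fun A hA => mem_iUnion.2 (ENNReal.lt_iff_exists_rat_btwn.1 (hT A hA).2 |>.imp fun _ hq => hq.2)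
  obtain ⟨q, hq⟩ := exists_not_countable_inter_of_subset_iUnion hcover hunc
  set r := Real.toNNReal q
  have hrc : (r : ℝ≥0∞) < c := (Set.Infinite.nonempty fun h => hq h.countable).some_mem.2.2
  obtain ⟨δ, hδpos, hδsum⟩ := ENNReal.exists_pos_sum_of_countable (tsub_pos_of_lt hrc).ne' ℕ
  obtain ⟨A, U, hinj, hAU, hUA⟩ := exists_injective_seq_of_not_countable hq
    (fun k A U => U ⊆ A ∧ μ (A \ U) < δ k) (fun U B => U ⊆ B) fun k S hS hSunc =>
      exists_mem_measure_sdiff_lt_not_countable_setOf_superset μ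
        (fun A hA => ⟨(hT A (hS hA).1).1, ((hS hA).2.1.trans ENNReal.coe_lt_top).ne⟩) hSunc
        (ENNReal.coe_ne_zero.2 (hδpos k).ne')
  refine ⟨range A, range_subset_iff.2 fun k => (hAU k).1.1, countable_range A,
    infinite_range_of_injective hinj, ?_⟩
  have hUA' (j k : ℕ) (hjk : j ≤ k) : U j ⊆ A k := by
    obtain rfl | hjk := hjk.eq_or_lt
    exacts [(hAU j).2.1, hUA j k hjk]
  calc μ (⋃₀ range A) ≤ (⨆ k, μ (A k)) + ∑' k, μ (A k \ U k) :=
        sUnion_range A ▸ measure_iUnion_le_iSup_add_tsum_sdiff μ hUA'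
    _ ≤ r + ∑' k, (δ k : ℝ≥0∞) :=
        add_le_add (iSup_le fun k => (hAU k).1.2.1.le)
          (ENNReal.tsum_le_tsum fun k => (hAU k).2.2.le)
    _ < r + (c - r) := ENNReal.add_lt_add_left ENNReal.coe_ne_top hδsum
    _ = c := add_tsub_cancel_of_le hrc.le

end SecondCountable

/-- The Amoeba partial order `𝔸` has `(ω₁, ω)`-caliber: every uncountable set `T` of open
subsets of `2^ω` of measure `< 1/2` has a countably infinite subset `F` whose union still has
measure `< 1/2` (i.e. `F` has a common lower bound in `𝔸`). -/
theorem amoeba_has_caliber_omega1_omega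
    (T : Set (Set (ℕ → Bool)))
    (hT : ∀ A ∈ T, IsOpen A ∧ μC A < 1 / 2)
    (hunc : ¬ T.Countable) :
    ∃ F ⊆ T, F.Countable ∧ F.Infinite ∧ μC (⋃₀ F) < 1 / 2 :=
  exists_countable_infinite_subset_measure_sUnion_lt μC hT hunc

end
end

section
/- 𝔸″ is dense in 𝔸′: for every condition (u,φ) ∈ 𝔸′ there exists a condition (v,ψ) ∈ 𝔸″ with (v,ψ) ≤ (u,φ). -/
/-!
Let `t < 1/2` be the measure of the cover of `φ` and pick `m` with `t + 2^{-m} ≤ 1/2`. The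
prefix-minimal strings of `φ` have pairwise disjoint cylinders, so those of length `≥ k` cover a set
whose measure tends to `0` as `k → ∞`; fix `N ≥ n` with this measure below `2^{-(m+7)}` for
`k = N + 2`. The new condition has domain `N + 2`: it keeps `φ` up to level `N + 1`, adds at level
`N + 1` the least number `K` of strings `s ++ [false]` lifting the measure of its first `N + 2`
levels above `1/2 - 2^{-m}`, and beyond that keeps only the prefix-minimal strings of `φ`.
The parents `s` of length `N` are taken among those whose cylinder meets the cover of `φ` in
measure `< 2^{-(N+1)}`, and counting shows there are enough of them. The new strings then avoid
the old cover, and each sibling `s ++ [true]` leaves, inside every cylinder below it, a hole of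
positive measure outside the new cover: this keeps (*).
-/

open MeasureTheory

noncomputable section

/-- Property (*): for every binary string `σ` of length `i` not in `φ i`, the union of the
cylinders determined by proper extensions of `σ` appearing in some `φ j`, `j > i`,
has measure `< 2^{-i}`. -/
def StarProperty (φ : ℕ → Set (List Bool)) : Prop :=
  ∀ i : ℕ, ∀ σ : List Bool, σ.length = i → σ ∉ φ i →
    μC (⋃ τ ∈ {τ : List Bool | σ <+: τ ∧ σ ≠ τ ∧ ∃ j, i < j ∧ τ ∈ φ j}, cyl τ)
      < (1 / 2 : ENNReal) ^ i

/-- A condition `(u, φ)` of the partial order `𝔸′`: `φ` assigns to each `i` a set of binary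
strings of length `i`, satisfies (*), the union of all the corresponding cylinders has measure
`< 1/2`, and `u = φ↾n` is a finite initial segment of `φ` (represented by its domain `n`). -/
structure APrime where
  /-- the domain of the finite initial segment `u` (so `u = φ↾n`) -/
  n : ℕ
  /-- the function `φ` -/
  φ : ℕ → Set (List Bool)
  hlen : ∀ i : ℕ, ∀ σ ∈ φ i, σ.length = i
  hstar : StarProperty φ
  hmeas : μC (⋃ i, ⋃ σ ∈ φ i, cyl σ) < 1 / 2

/-- The order of `𝔸′`: `(u,φ) ≤ (v,ψ)` iff `u ⊇ v` and every string in some `ψ i` extends a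
string in some `φ j` with `j ≤ i`. -/
def APrimeLe (p q : APrime) : Prop :=
  q.n ≤ p.n ∧ (∀ i < q.n, p.φ i = q.φ i) ∧
    ∀ i : ℕ, ∀ σ ∈ q.φ i, ∃ j ≤ i, ∃ τ ∈ p.φ j, τ <+: σ

/-- Membership in the suborder `𝔸″ ⊆ 𝔸′`.  (The inequalities `μ > 1/2 - 2^{-m}` and
`μ ≤ 1/2 - 2^{-m}` are stated additively as `μ + 2^{-m} > 1/2`, resp. `≤`, to express
real-number subtraction faithfully in `ℝ≥0∞`.) -/
def InAPP (p : APrime) : Prop :=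
  ∃ m : ℕ,
    1 / 2 < μC (⋃ i < p.n, ⋃ σ ∈ p.φ i, cyl σ) + (1 / 2 : ENNReal) ^ m ∧
    μC (⋃ i < p.n - 1, ⋃ σ ∈ p.φ i, cyl σ) + (1 / 2 : ENNReal) ^ m ≤ 1 / 2 ∧
    μC (⋃ i, ⋃ _ : p.n ≤ i, ⋃ σ ∈ p.φ i, cyl σ) < (1 / 2 : ENNReal) ^ (m + 7)

open scoped ENNReal
open Filter Topology

lemma Int.floor_two_mul {k : Type*} [Field k] [LinearOrder k] [IsOrderedRing k] [FloorRing k]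
    (x : k) : ⌊2 * x⌋ = 2 * ⌊x⌋ + ⌊2 * x⌋ % 2 := by
  have h : ⌊x⌋ = ⌊2 * x⌋ / 2 := by
    simpa using Int.floor_div_natCast (2 * x) 2
  omega

lemma ENNReal.two_pow_mul_half_pow_succ (n : ℕ) : (2 : ℝ≥0∞) ^ n * (1 / 2) ^ (n + 1) = 1 / 2 := by
  rw [pow_succ, ← mul_assoc, ← mul_pow, one_div,
    ENNReal.mul_inv_cancel two_ne_zero ENNReal.ofNat_ne_top, one_pow, one_mul]

lemma ENNReal.half_pow_succ_add_half_pow_succ (m : ℕ) :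
    (1 / 2 : ℝ≥0∞) ^ (m + 1) + (1 / 2) ^ (m + 1) = (1 / 2) ^ m := by
  rw [pow_succ, mul_one_div, ENNReal.add_halves]

lemma ENNReal.exists_half_pow_add_le {a b : ℝ≥0∞} (h : a < b) : ∃ m : ℕ, a + (1 / 2) ^ m ≤ b := by
  obtain ⟨m, hm⟩ := ENNReal.exists_inv_two_pow_lt (tsub_pos_iff_lt.mpr h).ne'
  refine ⟨m, ?_⟩
  calc a + (1 / 2) ^ m ≤ a + (b - a) := by rw [one_div]; gcongr
    _ = b := add_tsub_cancel_of_le h.le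

/-- The least `K` with `b < a + K * ε` overshoots `b` by at most `ε`. -/
lemma ENNReal.exists_nat_lt_add_mul_le {a b ε : ℝ≥0∞} (hab : a ≤ b) (hb : b ≠ ⊤) (hε : ε ≠ 0) :
    ∃ K : ℕ, b < a + K * ε ∧ a + K * ε ≤ b + ε := by
  classical
  have hex : ∃ K : ℕ, b < a + K * ε := by
    obtain ⟨K, hK⟩ := ENNReal.exists_nat_mul_gt hε hb
    exact ⟨K, hK.trans_le le_add_self⟩
  refine ⟨Nat.find hex, Nat.find_spec hex, ?_⟩
  rcases Nat.eq_zero_or_eq_succ_pred (Nat.find hex) with h0 | hsucc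
  · simpa [h0] using hab.trans le_self_add
  · have hmin := not_lt.mp (Nat.find_min hex (Nat.pred_lt_of_lt (by omega : 0 < Nat.find hex)))
    rw [hsucc, Nat.cast_succ, add_mul, one_mul, ← add_assoc]
    gcongr

lemma mem_cyl {σ : List Bool} {f : ℕ → Bool} :
    f ∈ cyl σ ↔ ∀ i (h : i < σ.length), f i = σ[i] := Iff.rfl

lemma measurableSet_cyl (σ : List Bool) : MeasurableSet (cyl σ) := by
  have : cyl σ = ⋂ i : Fin σ.length, (fun f : ℕ → Bool => f i) ⁻¹' {σ[i]} := by
    ext f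
    simp only [mem_cyl, Set.mem_iInter, Set.mem_preimage, Set.mem_singleton_iff]
    exact ⟨fun h i => h i i.2, fun h i hi => h ⟨i, hi⟩⟩
  rw [this]
  exact .iInter fun i => measurable_pi_apply _ (.singleton _)

lemma measurableSet_biUnion_cyl (A : Set (List Bool)) : MeasurableSet (⋃ σ ∈ A, cyl σ) :=
  .biUnion A.to_countable fun σ _ => measurableSet_cyl σ

lemma cyl_append_singleton (σ : List Bool) (b : Bool) :
    cyl (σ ++ [b]) = cyl σ ∩ {f | f σ.length = b} := by
  ext f
  simp only [mem_cyl, Set.mem_inter_iff, Set.mem_ofPred_eq, List.length_append,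
    List.length_singleton]
  constructor
  · intro h
    refine ⟨fun i hi => by simpa [List.getElem_append_left hi] using h i (by omega), ?_⟩
    simpa using h σ.length (by omega)
  · rintro ⟨h, hb⟩ i hi
    rcases Nat.lt_or_ge i σ.length with hi' | hi'
    · simpa [List.getElem_append_left hi'] using h i hi'
    · obtain rfl : i = σ.length := by omega
      simpa using hb

lemma cyl_subset_cyl {σ τ : List Bool} (h : σ <+: τ) : cyl τ ⊆ cyl σ := fun f hf i hi => by
  rw [hf i (by have := h.length_le; omega)]
  exact (h.getElem hi).symm

lemma prefix_of_mem_cyl {σ τ : List Bool} {f : ℕ → Bool} (hσ : f ∈ cyl σ) (hτ : f ∈ cyl τ)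
    (h : σ.length ≤ τ.length) : σ <+: τ := by
  rw [List.prefix_iff_eq_take]
  refine List.ext_getElem (by simp [h]) fun i hi _ => ?_
  rw [List.getElem_take, ← mem_cyl.mp hσ i hi, ← mem_cyl.mp hτ i (by omega)]

lemma disjoint_cyl {σ τ : List Bool} (hl : σ.length = τ.length) (hne : σ ≠ τ) :
    Disjoint (cyl σ) (cyl τ) :=
  Set.disjoint_left.mpr fun _ hσ hτ => hne ((prefix_of_mem_cyl hσ hτ hl.le).eq_of_length hl)

lemma measurable_binDigits : Measurable binDigits :=
  measurable_pi_lambda _ fun _ =>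
    (measurable_from_top (f := fun z : ℤ => decide (z % 2 = 1))).comp
      ((measurable_id.mul_const _).floor)

def binVal (σ : List Bool) : ℕ := σ.foldl (fun k b => 2 * k + b.toNat) 0

lemma binVal_append_singleton (σ : List Bool) (b : Bool) :
    binVal (σ ++ [b]) = 2 * binVal σ + b.toNat := by
  simp [binVal]

lemma binVal_lt (σ : List Bool) : binVal σ < 2 ^ σ.length := by
  induction σ using List.reverseRecOn with
  | nil => simp [binVal]
  | append_singleton σ b ih =>
    rw [binVal_append_singleton, List.length_append, List.length_singleton, pow_succ]
    have := Bool.toNat_le b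
    omega

lemma binDigits_mem_cyl_iff {r : ℝ} (h0 : 0 ≤ r) (h1 : r < 1) (σ : List Bool) :
    binDigits r ∈ cyl σ ↔ ⌊r * 2 ^ σ.length⌋ = binVal σ := by
  induction σ using List.reverseRecOn with
  | nil => simp [cyl, binVal, Int.floor_eq_zero_iff, h0, h1]
  | append_singleton σ b ih =>
    have hfloor := Int.floor_two_mul (r * 2 ^ σ.length)
    rw [cyl_append_singleton, Set.mem_inter_iff, ih, Set.mem_ofPred_eq, binDigits,
      List.length_append, List.length_singleton, binVal_append_singleton,
      show r * 2 ^ (σ.length + 1) = 2 * (r * 2 ^ σ.length) by ring]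
    cases b <;> simp <;> omega

lemma binDigits_preimage_cyl (σ : List Bool) :
    binDigits ⁻¹' cyl σ ∩ Set.Ico 0 1 =
      Set.Ico ((binVal σ : ℝ) / 2 ^ σ.length) ((binVal σ + 1) / 2 ^ σ.length) := by
  have hpos : (0 : ℝ) < 2 ^ σ.length := by positivity
  have hlt : (binVal σ : ℝ) + 1 ≤ 2 ^ σ.length := by exact_mod_cast binVal_lt σ
  ext r
  simp only [Set.mem_inter_iff, Set.mem_preimage, Set.mem_Ico, div_le_iff₀ hpos,
    lt_div_iff₀ hpos]
  constructor
  · rintro ⟨h, h0, h1⟩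
    rw [binDigits_mem_cyl_iff h0 h1, Int.floor_eq_iff] at h
    exact_mod_cast h
  · rintro ⟨h0, h1⟩
    have hr0 : 0 ≤ r := by nlinarith
    have hr1 : r < 1 := by nlinarith
    refine ⟨(binDigits_mem_cyl_iff hr0 hr1 σ).mpr (Int.floor_eq_iff.mpr ?_), hr0, hr1⟩
    exact ⟨by exact_mod_cast h0, by exact_mod_cast h1⟩

lemma μC_cyl (σ : List Bool) : μC (cyl σ) = (1 / 2) ^ σ.length := by
  rw [μC, Measure.map_apply measurable_binDigits (measurableSet_cyl σ),
    Measure.restrict_apply (measurable_binDigits (measurableSet_cyl σ)),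
    binDigits_preimage_cyl, Real.volume_Ico, ← sub_div, add_sub_cancel_left,
    ENNReal.ofReal_div_of_pos (by positivity), ENNReal.ofReal_pow zero_le_two]
  simp [ENNReal.inv_pow]

instance : IsProbabilityMeasure μC where
  measure_univ := by
    simpa [cyl] using μC_cyl []

section Covers

variable (φ : ℕ → Set (List Bool))

def cover : Set (ℕ → Bool) := ⋃ i, ⋃ σ ∈ φ i, cyl σ

def coverBelow (n : ℕ) : Set (ℕ → Bool) := ⋃ i < n, ⋃ σ ∈ φ i, cyl σ

def coverFrom (n : ℕ) : Set (ℕ → Bool) := ⋃ i, ⋃ _ : n ≤ i, ⋃ σ ∈ φ i, cyl σ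

lemma measurableSet_cover : MeasurableSet (cover φ) :=
  .iUnion fun i => measurableSet_biUnion_cyl (φ i)

lemma measurableSet_coverFrom (n : ℕ) : MeasurableSet (coverFrom φ n) :=
  .iUnion fun i => .iUnion fun _ => measurableSet_biUnion_cyl (φ i)

lemma coverBelow_subset_cover (n : ℕ) : coverBelow φ n ⊆ cover φ :=
  Set.iUnion_mono fun _ => Set.iUnion_subset fun _ => subset_rfl

lemma antitone_coverFrom : Antitone (coverFrom φ) := fun _ _ hmn =>
  Set.iUnion_mono fun _ => Set.iUnion_subset fun hi =>
    Set.subset_iUnion_of_subset (hmn.trans hi) subset_rfl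

def prefixMinimal (i : ℕ) : Set (List Bool) :=
  {σ ∈ φ i | ∀ j, ∀ ρ ∈ φ j, ρ <+: σ → ρ = σ}

variable {φ}

lemma cyl_subset_cover {i : ℕ} {τ : List Bool} (hτ : τ ∈ φ i) : cyl τ ⊆ cover φ :=
  Set.subset_iUnion_of_subset i (Set.subset_biUnion_of_mem (u := cyl) hτ)

lemma exists_prefixMinimal_prefix {i : ℕ} {σ : List Bool} (hσ : σ ∈ φ i) :
    ∃ j, ∃ ρ ∈ prefixMinimal φ j, ρ <+: σ := by
  classical
  have hex : ∃ k, ∃ j, ∃ ρ ∈ φ j, ρ <+: σ ∧ ρ.length = k := ⟨_, i, σ, hσ, List.prefix_refl σ, rfl⟩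
  obtain ⟨j, ρ, hρ, hρσ, hlen⟩ := Nat.find_spec hex
  refine ⟨j, ρ, ⟨hρ, fun j' ρ' hρ' hρ'ρ => hρ'ρ.eq_of_length ?_⟩, hρσ⟩
  exact le_antisymm hρ'ρ.length_le
    (hlen ▸ Nat.find_min' hex ⟨j', ρ', hρ', hρ'ρ.trans hρσ, rfl⟩)

lemma disjoint_cyl_of_prefixMinimal {i j : ℕ} {σ τ : List Bool} (hσ : σ ∈ prefixMinimal φ i)
    (hτ : τ ∈ prefixMinimal φ j) (hne : σ ≠ τ) : Disjoint (cyl σ) (cyl τ) := by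
  refine Set.disjoint_left.mpr fun f hfσ hfτ => hne ?_
  rcases le_total σ.length τ.length with h | h
  · exact hτ.2 i σ hσ.1 (prefix_of_mem_cyl hfσ hfτ h)
  · exact (hσ.2 j τ hτ.1 (prefix_of_mem_cyl hfτ hfσ h)).symm

lemma cover_subset_coverBelow_union_coverFrom (n : ℕ) :
    cover φ ⊆ coverBelow φ n ∪ coverFrom (prefixMinimal φ) n := by
  intro f hf
  simp only [cover, coverBelow, coverFrom, Set.mem_iUnion, Set.mem_union] at hf ⊢
  obtain ⟨i, σ, hσ, hfσ⟩ := hf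
  obtain ⟨j, ρ, hρ, hρσ⟩ := exists_prefixMinimal_prefix hσ
  rcases Nat.lt_or_ge j n with hj | hj
  · exact .inl ⟨j, hj, ρ, hρ.1, cyl_subset_cyl hρσ hfσ⟩
  · exact .inr ⟨j, hj, ρ, hρ, cyl_subset_cyl hρσ hfσ⟩

lemma iInter_coverFrom_prefixMinimal (hlen : ∀ i, ∀ σ ∈ φ i, σ.length = i) :
    ⋂ n, coverFrom (prefixMinimal φ) n = ∅ := by
  refine Set.eq_empty_of_forall_notMem fun f hf => ?_
  simp only [coverFrom, Set.mem_iInter, Set.mem_iUnion] at hf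
  obtain ⟨i, -, σ, hσ, hfσ⟩ := hf 0
  obtain ⟨j, hij, τ, hτ, hfτ⟩ := hf (i + 1)
  have hστ : σ ≠ τ := fun h => by
    have := hlen i σ hσ.1
    have := hlen j τ hτ.1
    subst h
    omega
  exact Set.disjoint_left.mp (disjoint_cyl_of_prefixMinimal hσ hτ hστ) hfσ hfτ

lemma tendsto_measure_coverFrom_prefixMinimal (μ : Measure (ℕ → Bool)) [IsFiniteMeasure μ]
    (hlen : ∀ i, ∀ σ ∈ φ i, σ.length = i) :
    Tendsto (fun n => μ (coverFrom (prefixMinimal φ) n)) atTop (𝓝 0) := by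
  have := tendsto_measure_iInter_atTop (μ := μ)
    (fun n => (measurableSet_coverFrom (prefixMinimal φ) n).nullMeasurableSet)
    (antitone_coverFrom _)
    ⟨0, measure_ne_top _ _⟩
  rwa [iInter_coverFrom_prefixMinimal hlen, measure_empty] at this

end Covers

def stringsOfLength (n : ℕ) : Finset (List Bool) :=
  (Finset.univ : Finset (List.Vector Bool n)).map ⟨List.Vector.toList, List.Vector.toList_injective⟩

lemma mem_stringsOfLength {n : ℕ} {σ : List Bool} : σ ∈ stringsOfLength n ↔ σ.length = n :=
  ⟨fun h => by obtain ⟨v, -, rfl⟩ := Finset.mem_map.mp h; exact v.toList_length,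
    fun h => Finset.mem_map.mpr ⟨⟨σ, h⟩, Finset.mem_univ _, rfl⟩⟩

lemma card_stringsOfLength (n : ℕ) : (stringsOfLength n).card = 2 ^ n := by
  simp [stringsOfLength]

lemma card_mul_le_measure_of_le_measure_cyl_inter {μ : Measure (ℕ → Bool)}
    {F : Finset (List Bool)} {n : ℕ} (hF : ∀ s ∈ F, s.length = n) {Y : Set (ℕ → Bool)}
    (hY : MeasurableSet Y) {c : ℝ≥0∞} (hc : ∀ s ∈ F, c ≤ μ (cyl s ∩ Y)) : F.card * c ≤ μ Y := by
  have hdisj : (F : Set (List Bool)).PairwiseDisjoint fun s => cyl s ∩ Y :=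
    fun s hs t ht hst => (disjoint_cyl ((hF s hs).trans (hF t ht).symm) hst).mono
      Set.inter_subset_left Set.inter_subset_left
  calc F.card * c = ∑ _s ∈ F, c := by simp
    _ ≤ ∑ s ∈ F, μ (cyl s ∩ Y) := Finset.sum_le_sum hc
    _ = μ (⋃ s ∈ F, cyl s ∩ Y) :=
      (measure_biUnion_finset hdisj fun s _ => (measurableSet_cyl s).inter hY).symm
    _ ≤ μ Y := measure_mono (Set.iUnion₂_subset fun _ _ => Set.inter_subset_right)

/-- At most `2^{N+1} μ Y` strings of length `N` have a cylinder meeting `Y` in measure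
`≥ 2^{-(N+1)}`, which leaves at least `K` of the `2^N` strings. -/
lemma exists_card_eq_measure_cyl_inter_lt {Y : Set (ℕ → Bool)} (hY : MeasurableSet Y) {N K : ℕ}
    (h : μC Y + K * (1 / 2) ^ (N + 1) < 1 / 2) :
    ∃ S : Finset (List Bool), (∀ s ∈ S, s.length = N) ∧ S.card = K ∧
      ∀ s ∈ S, μC (cyl s ∩ Y) < (1 / 2) ^ (N + 1) := by
  classical
  set good := (stringsOfLength N).filter fun s => μC (cyl s ∩ Y) < (1 / 2) ^ (N + 1)
  set bad := (stringsOfLength N).filter fun s => ¬ μC (cyl s ∩ Y) < (1 / 2) ^ (N + 1)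
  have hbad : bad.card * (1 / 2 : ℝ≥0∞) ^ (N + 1) ≤ μC Y :=
    card_mul_le_measure_of_le_measure_cyl_inter
      (fun s hs => mem_stringsOfLength.mp (Finset.mem_filter.mp hs).1) hY
      fun s hs => not_lt.mp (Finset.mem_filter.mp hs).2
  have hK : K ≤ good.card := by
    by_contra! hlt
    have hcard : good.card + bad.card = 2 ^ N := by
      rw [Finset.card_filter_add_card_filter_not, card_stringsOfLength]
    have : (1 / 2 : ℝ≥0∞) < 1 / 2 := calc
      (1 / 2 : ℝ≥0∞) = (good.card + bad.card : ℕ) * (1 / 2) ^ (N + 1) := by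
          rw [hcard, Nat.cast_pow, Nat.cast_ofNat, ENNReal.two_pow_mul_half_pow_succ]
      _ ≤ K * (1 / 2) ^ (N + 1) + μC Y := by
          rw [Nat.cast_add, add_mul]
          gcongr
      _ < 1 / 2 := by rwa [add_comm]
    exact lt_irrefl _ this
  obtain ⟨S, hSgood, hcard⟩ := Finset.exists_subset_card_eq hK
  refine ⟨S, fun s hs => ?_, hcard, fun s hs => ?_⟩
  · exact mem_stringsOfLength.mp (Finset.mem_filter.mp (hSgood hs)).1
  · exact (Finset.mem_filter.mp (hSgood hs)).2

def graft (φ : ℕ → Set (List Bool)) (N : ℕ) (S : Finset (List Bool)) (i : ℕ) :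
    Set (List Bool) :=
  {τ | i ≤ N + 1 ∧ τ ∈ φ i ∨ (i = N + 1 ∧ ∃ s ∈ S, τ = s ++ [false]) ∨
    N + 2 ≤ i ∧ τ ∈ prefixMinimal φ i}

section Graft

variable {φ : ℕ → Set (List Bool)} {N : ℕ} {S : Finset (List Bool)}

lemma length_of_mem_graft (hlen : ∀ i, ∀ σ ∈ φ i, σ.length = i) (hS : ∀ s ∈ S, s.length = N) :
    ∀ i, ∀ τ ∈ graft φ N S i, τ.length = i := by
  rintro i τ (⟨-, hτ⟩ | ⟨rfl, s, hs, rfl⟩ | ⟨-, hτ⟩)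
  · exact hlen i τ hτ
  · simp [hS s hs]
  · exact hlen i τ hτ.1

lemma graft_of_le {i : ℕ} (hi : i ≤ N) : graft φ N S i = φ i := by
  ext τ
  simp only [graft, Set.mem_ofPred_eq]
  constructor
  · rintro (⟨-, hτ⟩ | ⟨h, -⟩ | ⟨h, -⟩) <;> first | exact hτ | omega
  · exact fun hτ => .inl ⟨by omega, hτ⟩

lemma prefixMinimal_subset_graft (i : ℕ) : prefixMinimal φ i ⊆ graft φ N S i := fun τ hτ => by
  rcases Nat.lt_or_ge (N + 1) i with hi | hi
  · exact .inr (.inr ⟨hi, hτ⟩)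
  · exact .inl ⟨hi, hτ.1⟩

lemma mem_or_of_mem_graft {i : ℕ} {τ : List Bool} (hτ : τ ∈ graft φ N S i) :
    τ ∈ φ i ∨ ∃ s ∈ S, τ = s ++ [false] := by
  rcases hτ with ⟨-, hτ⟩ | ⟨-, hs⟩ | ⟨-, hτ⟩
  exacts [.inl hτ, .inr hs, .inl hτ.1]

lemma cover_graft_subset : cover (graft φ N S) ⊆ cover φ ∪ ⋃ s ∈ S, cyl (s ++ [false]) := by
  intro f hf
  simp only [cover, Set.mem_iUnion, Set.mem_union] at hf ⊢
  obtain ⟨i, τ, hτ, hfτ⟩ := hf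
  rcases mem_or_of_mem_graft hτ with hτ | ⟨s, hs, rfl⟩
  exacts [.inl ⟨i, τ, hτ, hfτ⟩, .inr ⟨s, hs, hfτ⟩]

lemma coverBelow_graft_succ : coverBelow (graft φ N S) (N + 1) = coverBelow φ (N + 1) :=
  Set.iUnion₂_congr fun i hi => by rw [graft_of_le (Nat.lt_succ_iff.mp hi)]

lemma coverFrom_graft_subset :
    coverFrom (graft φ N S) (N + 2) ⊆ coverFrom (prefixMinimal φ) (N + 2) := by
  refine Set.iUnion_mono fun i => Set.iUnion_mono' fun hi => ⟨hi, ?_⟩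
  refine Set.biUnion_subset_biUnion_left fun τ hτ => ?_
  rcases hτ with ⟨h, -⟩ | ⟨h, -⟩ | ⟨-, hτ⟩
  exacts [absurd h (by omega), absurd h (by omega), hτ]

lemma measure_cyl_append_inter_lt {s : List Bool} (hs : s.length = N) {Y : Set (ℕ → Bool)}
    (hgood : μC (cyl s ∩ Y) < (1 / 2) ^ (N + 1)) (b : Bool) :
    μC (cyl (s ++ [b]) ∩ Y) < μC (cyl (s ++ [b])) := by
  rw [μC_cyl, List.length_append, hs, List.length_singleton]
  exact (measure_mono (Set.inter_subset_inter_left _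
    (cyl_subset_cyl (List.prefix_append s [b])))).trans_lt hgood

lemma disjoint_cyl_append_coverBelow (hlen : ∀ i, ∀ σ ∈ φ i, σ.length = i) {s : List Bool}
    (hs : s.length = N) (hgood : μC (cyl s ∩ cover φ) < (1 / 2) ^ (N + 1)) (b : Bool) :
    Disjoint (cyl (s ++ [b])) (coverBelow φ (N + 2)) := by
  refine Set.disjoint_left.mpr fun f hf hf' => (measure_cyl_append_inter_lt hs hgood b).ne ?_
  simp only [coverBelow, Set.mem_iUnion] at hf'
  obtain ⟨j, hj, τ, hτ, hfτ⟩ := hf'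
  have hτs : τ <+: s ++ [b] := prefix_of_mem_cyl hfτ hf (by simp [hlen j τ hτ, hs]; omega)
  exact congrArg μC (Set.inter_eq_left.mpr ((cyl_subset_cyl hτs).trans (cyl_subset_cover hτ)))

lemma measure_biUnion_cyl_append (hS : ∀ s ∈ S, s.length = N) (b : Bool) :
    μC (⋃ s ∈ S, cyl (s ++ [b])) = S.card * (1 / 2) ^ (N + 1) := by
  rw [measure_biUnion_finset (fun s hs t ht hst => disjoint_cyl (by simp [hS s hs, hS t ht])
    (by simpa using hst)) fun s _ => measurableSet_cyl _]
  rw [Finset.sum_congr rfl fun s hs => by rw [μC_cyl, List.length_append, hS s hs,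
    List.length_singleton]]
  simp

lemma measure_coverBelow_add_le_coverBelow_graft (hlen : ∀ i, ∀ σ ∈ φ i, σ.length = i)
    (hS : ∀ s ∈ S, s.length = N) (hgood : ∀ s ∈ S, μC (cyl s ∩ cover φ) < (1 / 2) ^ (N + 1)) :
    μC (coverBelow φ (N + 2)) + S.card * (1 / 2) ^ (N + 1) ≤
      μC (coverBelow (graft φ N S) (N + 2)) := by
  rw [← measure_biUnion_cyl_append hS false, ← measure_union
    (Set.disjoint_iUnion₂_right.mpr fun s hs =>
      (disjoint_cyl_append_coverBelow hlen (hS s hs) (hgood s hs) false).symm)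
    (.biUnion S.countable_toSet fun s _ => measurableSet_cyl _)]
  refine measure_mono (Set.union_subset ?_ ?_)
  · exact Set.iUnion₂_mono fun i hi => Set.biUnion_subset_biUnion_left
      fun τ hτ => .inl ⟨by omega, hτ⟩
  · exact Set.iUnion₂_subset fun s hs => Set.subset_iUnion₂_of_subset (N + 1) (by omega)
      (Set.subset_biUnion_of_mem (u := cyl) (.inr (.inl ⟨rfl, s, hs, rfl⟩)))

lemma measure_cyl_append_diff_cover_ne_zero {s : List Bool} (hs : s.length = N)
    (hgood : μC (cyl s ∩ cover φ) < (1 / 2) ^ (N + 1)) (b : Bool) :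
    μC (cyl (s ++ [b]) \ cover φ) ≠ 0 := fun h0 =>
  ((measure_le_inter_add_sdiff μC _ (cover φ)).trans_lt
    (by rw [h0, add_zero]; exact measure_cyl_append_inter_lt hs hgood b)).false

lemma disjoint_cyl_append_true_diff_cover_graft (hS : ∀ s ∈ S, s.length = N) {s : List Bool}
    (hs : s ∈ S) : Disjoint (cyl (s ++ [true]) \ cover φ) (cover (graft φ N S)) := by
  refine Set.disjoint_left.mpr fun f ⟨hfs, hfφ⟩ hf => ?_
  rcases cover_graft_subset hf with hf | hf
  · exact hfφ hf
  · simp only [Set.mem_iUnion] at hf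
    obtain ⟨t, ht, hft⟩ := hf
    refine Set.disjoint_left.mp (disjoint_cyl (by simp [hS s hs, hS t ht]) ?_) hfs hft
    simp

lemma measure_cyl_inter_cover_graft_lt (hS : ∀ s ∈ S, s.length = N)
    (hgood : ∀ s ∈ S, μC (cyl s ∩ cover φ) < (1 / 2) ^ (N + 1)) {s σ : List Bool} (hs : s ∈ S)
    (hσs : σ <+: s) : μC (cyl σ ∩ cover (graft φ N S)) < μC (cyl σ) := by
  set H := cyl (s ++ [true]) \ cover φ
  have hHσ : H ⊆ cyl σ :=
    Set.sdiff_subset.trans (cyl_subset_cyl (hσs.trans (List.prefix_append s [true])))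
  calc μC (cyl σ ∩ cover (graft φ N S)) ≤ μC (cyl σ \ H) :=
        measure_mono fun f ⟨hfσ, hf⟩ => ⟨hfσ, fun hfH =>
          Set.disjoint_left.mp (disjoint_cyl_append_true_diff_cover_graft hS hs) hfH hf⟩
    _ = μC (cyl σ) - μC H :=
      measure_sdiff hHσ ((measurableSet_cyl _).diff (measurableSet_cover φ)).nullMeasurableSet
        (measure_ne_top _ _)
    _ < μC (cyl σ) := ENNReal.sub_lt_self (measure_ne_top _ _) (by simp [μC_cyl])
        (measure_cyl_append_diff_cover_ne_zero (hS s hs) (hgood s hs) true)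

lemma starProperty_graft (hstar : StarProperty φ)
    (hS : ∀ s ∈ S, s.length = N) (hgood : ∀ s ∈ S, μC (cyl s ∩ cover φ) < (1 / 2) ^ (N + 1)) :
    StarProperty (graft φ N S) := by
  intro i σ hσlen hσ
  set X := ⋃ τ ∈ {τ | σ <+: τ ∧ σ ≠ τ ∧ ∃ j, i < j ∧ τ ∈ graft φ N S j}, cyl τ
  by_cases hσS : ∃ s ∈ S, σ <+: s
  · obtain ⟨s, hs, hσs⟩ := hσS
    have hX : X ⊆ cyl σ ∩ cover (graft φ N S) := fun f hf => by
      simp only [X, Set.mem_iUnion] at hf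
      obtain ⟨τ, ⟨hστ, -, j, -, hτ⟩, hfτ⟩ := hf
      exact ⟨cyl_subset_cyl hστ hfτ, cyl_subset_cover hτ hfτ⟩
    rw [← hσlen, ← μC_cyl]
    exact (measure_mono hX).trans_lt (measure_cyl_inter_cover_graft_lt hS hgood hs hσs)
  by_cases hσφ : σ ∈ φ i
  · have hi : N + 2 ≤ i := by
      by_contra hi
      exact hσ (.inl ⟨by omega, hσφ⟩)
    have hX : X = ∅ := by
      refine Set.eq_empty_of_forall_notMem fun f hf => ?_
      simp only [X, Set.mem_iUnion] at hf
      obtain ⟨τ, ⟨hστ, hne, j, hij, hτ⟩, -⟩ := hf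
      rcases hτ with ⟨h, -⟩ | ⟨h, -⟩ | ⟨-, hτ⟩
      exacts [by omega, by omega, hne (hτ.2 i σ hσφ hστ)]
    rw [hX, measure_empty]
    exact ENNReal.pow_pos (by norm_num) i
  · refine lt_of_le_of_lt (measure_mono (Set.biUnion_subset_biUnion_left ?_))
      (hstar i σ hσlen hσφ)
    rintro τ ⟨hστ, hne, j, hij, hτ⟩
    refine ⟨hστ, hne, j, hij, ?_⟩
    rcases mem_or_of_mem_graft hτ with hτ | ⟨s, hs, rfl⟩
    · exact hτ
    · rcases List.prefix_concat_iff.mp hστ with h | h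
      exacts [absurd h hne, absurd ⟨s, hs, h⟩ hσS]

lemma exists_graft_prefix (hlen : ∀ i, ∀ σ ∈ φ i, σ.length = i) {i : ℕ} {σ : List Bool}
    (hσ : σ ∈ φ i) : ∃ j ≤ i, ∃ τ ∈ graft φ N S j, τ <+: σ := by
  obtain ⟨j, τ, hτ, hτσ⟩ := exists_prefixMinimal_prefix hσ
  refine ⟨j, ?_, τ, prefixMinimal_subset_graft j hτ, hτσ⟩
  rw [← hlen j τ hτ.1, ← hlen i σ hσ]
  exact hτσ.length_le

end Graft

def graftCondition (p : APrime) (N : ℕ) (S : Finset (List Bool)) (hS : ∀ s ∈ S, s.length = N)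
    (hgood : ∀ s ∈ S, μC (cyl s ∩ cover p.φ) < (1 / 2) ^ (N + 1))
    (hbound : μC (cover p.φ) + S.card * (1 / 2) ^ (N + 1) < 1 / 2) : APrime where
  n := N + 2
  φ := graft p.φ N S
  hlen := length_of_mem_graft p.hlen hS
  hstar := starProperty_graft p.hstar hS hgood
  hmeas := calc
    μC (cover (graft p.φ N S)) ≤ μC (cover p.φ ∪ ⋃ s ∈ S, cyl (s ++ [false])) :=
      measure_mono cover_graft_subset
    _ ≤ μC (cover p.φ) + S.card * (1 / 2) ^ (N + 1) := by
      rw [← measure_biUnion_cyl_append hS false]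
      exact measure_union_le _ _
    _ < 1 / 2 := hbound

lemma graftCondition_le (p : APrime) {N : ℕ} (hN : p.n ≤ N + 1) {S : Finset (List Bool)}
    (hS : ∀ s ∈ S, s.length = N) (hgood : ∀ s ∈ S, μC (cyl s ∩ cover p.φ) < (1 / 2) ^ (N + 1))
    (hbound : μC (cover p.φ) + S.card * (1 / 2) ^ (N + 1) < 1 / 2) :
    APrimeLe (graftCondition p N S hS hgood hbound) p :=
  ⟨by dsimp [graftCondition]; omega, fun i hi => graft_of_le (by omega),
    fun _ _ hσ => exists_graft_prefix p.hlen hσ⟩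

lemma measure_cover_add_lt_half {φ : ℕ → Set (List Bool)} {m N K : ℕ} (hmN : m ≤ N)
    (htail : μC (coverFrom (prefixMinimal φ) (N + 2)) < (1 / 2) ^ (m + 7))
    (hK : μC (coverBelow φ (N + 2)) + (1 / 2) ^ m + K * (1 / 2) ^ (N + 1) ≤
      1 / 2 + (1 / 2) ^ (N + 1)) :
    μC (cover φ) + K * (1 / 2) ^ (N + 1) < 1 / 2 := by
  set a := μC (coverBelow φ (N + 2))
  set τ := μC (coverFrom (prefixMinimal φ) (N + 2))
  set x : ℝ≥0∞ := (1 / 2) ^ (N + 1)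
  have hcover : μC (cover φ) ≤ a + τ :=
    (measure_mono (cover_subset_coverBelow_union_coverFrom (N + 2))).trans (measure_union_le _ _)
  have hanti : ∀ {k l : ℕ}, k ≤ l → ((1 : ℝ≥0∞) / 2) ^ l ≤ (1 / 2) ^ k :=
    fun hkl => pow_le_pow_of_le_one (by norm_num) (by norm_num) hkl
  have hsmall : x + τ < (1 / 2) ^ m := calc
    x + τ < (1 / 2) ^ (m + 1) + (1 / 2) ^ (m + 1) :=
      ENNReal.add_lt_add_of_le_of_lt (by simp [x]) (hanti (by omega))
        (htail.trans_le (hanti (by omega)))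
    _ = (1 / 2) ^ m := ENNReal.half_pow_succ_add_half_pow_succ m
  refine (ENNReal.add_lt_add_iff_right (b := _ + _) (by simp : ((1 : ℝ≥0∞) / 2) ^ m ≠ ⊤)).mp ?_
  calc μC (cover φ) + K * x + (1 / 2) ^ m ≤ a + τ + K * x + (1 / 2) ^ m := by gcongr
    _ = a + (1 / 2) ^ m + K * x + τ := by ring
    _ ≤ 1 / 2 + x + τ := by gcongr
    _ < 1 / 2 + (1 / 2) ^ m := by
      rw [add_assoc]
      exact ENNReal.add_lt_add_left (by simp) hsmall

/-- `𝔸″` is dense in `𝔸′`: every condition of `𝔸′` has an extension lying in `𝔸″`. -/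
theorem APP_dense_in_APrime (p : APrime) :
    ∃ q : APrime, InAPP q ∧ APrimeLe q p := by
  obtain ⟨m, hm⟩ : ∃ m : ℕ, μC (cover p.φ) + (1 / 2) ^ m ≤ 1 / 2 :=
    ENNReal.exists_half_pow_add_le p.hmeas
  obtain ⟨N₀, htail⟩ := eventually_atTop.mp
    ((tendsto_measure_coverFrom_prefixMinimal μC p.hlen).eventually
      (gt_mem_nhds (ENNReal.pow_pos (by norm_num : (0 : ℝ≥0∞) < 1 / 2) (m + 7))))
  set N := N₀ + p.n + m
  obtain ⟨K, hK_lt, hK_le⟩ := ENNReal.exists_nat_lt_add_mul_le (b := 1 / 2) (ε := (1 / 2) ^ (N + 1))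
    ((add_le_add (measure_mono (coverBelow_subset_cover p.φ (N + 2))) le_rfl).trans hm)
    (by simp) (by simp)
  have hbound := measure_cover_add_lt_half (by omega) (htail (N + 2) (by omega)) hK_le
  obtain ⟨S, hS, rfl, hgood⟩ := exists_card_eq_measure_cyl_inter_lt (measurableSet_cover p.φ) hbound
  refine ⟨graftCondition p N S hS hgood hbound, ⟨m, ?_, ?_, ?_⟩,
    graftCondition_le p (by omega) hS hgood hbound⟩
  · calc 1 / 2 < μC (coverBelow p.φ (N + 2)) + (1 / 2) ^ m + S.card * (1 / 2) ^ (N + 1) := hK_lt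
      _ ≤ μC (coverBelow (graft p.φ N S) (N + 2)) + (1 / 2) ^ m := by
        rw [add_right_comm]
        gcongr
        exact measure_coverBelow_add_le_coverBelow_graft p.hlen hS hgood
  · show μC (coverBelow (graft p.φ N S) (N + 1)) + _ ≤ _
    rw [coverBelow_graft_succ]
    exact (add_le_add (measure_mono (coverBelow_subset_cover p.φ (N + 1))) le_rfl).trans hm
  · exact (measure_mono coverFrom_graft_subset).trans_lt (htail (N + 2) (by omega))

end
end

section
/- The eventually different reals partial order 𝔼 does not have (ω₁,ω)-caliber. Concretely: if {f_α : α < ω₁} is a family of ω₁-many pairwise eventually different functions ℕ → ℕ, then T = {(⟨⟩, {f_α}) : α < ω₁} is an uncountable set of conditions in 𝔼 such that no countably infinite subset F ⊆ T has a common lower bound in 𝔼. -/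
/-!
A family of pairwise eventually different functions is injective, so the conditions
`(⟨⟩, {f a})` are pairwise distinct and there are `ℵ₁` of them. On the other hand, a condition
`(s, G)` lies below `(⟨⟩, {g})` only if `g ∈ G`, and `G` is finite, so a set of such conditions
with a common lower bound is finite.
-/

noncomputable section

/-- A condition of Miller's eventually different reals partial order `𝔼`: a pair `(s, G)`
where `s` is a finite sequence of natural numbers and `G` is a finite set of functions
`ℕ → ℕ`. -/
abbrev ECond : Type := List ℕ × Finset (ℕ → ℕ)

/-- The order of `𝔼`: `(s,G) ≤ (t,H)` iff `s ⊇ t`, `G ⊇ H`, and `s(i) ≠ g(i)` for every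
`g ∈ H` and every `i` with `|t| ≤ i < |s|`. -/
def ELe (p q : ECond) : Prop :=
  q.1 <+: p.1 ∧ q.2 ⊆ p.2 ∧
    ∀ g ∈ q.2, ∀ i : ℕ, q.1.length ≤ i → ∀ h : i < p.1.length, p.1.get ⟨i, h⟩ ≠ g i

theorem injective_of_pairwise_eventually_ne {ι β : Type*} {f : ι → ℕ → β}
    (hf : ∀ a b, a ≠ b → ∃ n, ∀ k ≥ n, f a k ≠ f b k) : Function.Injective f := by
  intro a b hab
  by_contra hne
  obtain ⟨n, hn⟩ := hf a b hne
  exact hn n le_rfl (congrFun hab n)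

theorem Set.not_countable_range_of_injective {ι α : Type*} [Uncountable ι] {g : ι → α}
    (hg : Function.Injective g) : ¬ (Set.range g).Countable := fun h =>
  have := h.to_subtype
  not_countable (Set.rangeFactorization_injective.mpr hg).countable

def ECond.ofFun (g : ℕ → ℕ) : ECond := ([], {g})

theorem ECond.ofFun_injective : Function.Injective ECond.ofFun := fun _ _ h =>
  Finset.singleton_injective (congrArg Prod.snd h)

theorem finite_setOf_ELe_ofFun (q : ECond) : {g | ELe q (ECond.ofFun g)}.Finite :=
  q.2.finite_toSet.subset fun g hg => hg.2.1 (Finset.mem_singleton_self g)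

/-- The eventually different reals partial order `𝔼` does not have `(ω₁, ω)`-caliber: given
`ω₁`-many pairwise eventually different functions `f_a : ℕ → ℕ`, the set
`T = {(⟨⟩, {f_a})}` is an uncountable set of conditions of `𝔼` no countably infinite
subset of which has a common lower bound in `𝔼`. -/
theorem E_not_caliber_omega1_omega (ι : Type) (f : ι → ℕ → ℕ)
    (hcard : Cardinal.mk ι = Cardinal.aleph 1)
    (hed : ∀ a b : ι, a ≠ b → ∃ n : ℕ, ∀ k ≥ n, f a k ≠ f b k) :
    ¬ (Set.Countable {p : ECond | ∃ a : ι, p = (([] : List ℕ), ({f a} : Finset (ℕ → ℕ)))}) ∧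
    ∀ F ⊆ {p : ECond | ∃ a : ι, p = (([] : List ℕ), ({f a} : Finset (ℕ → ℕ)))},
      F.Countable → F.Infinite → ¬ ∃ q : ECond, ∀ p ∈ F, ELe q p := by
  have hT : {p : ECond | ∃ a : ι, p = (([] : List ℕ), ({f a} : Finset (ℕ → ℕ)))} =
      Set.range (ECond.ofFun ∘ f) := by
    ext p
    simp only [Set.mem_ofPred_eq, Set.mem_range, Function.comp_apply, ECond.ofFun, eq_comm]
  have : Uncountable ι :=
    Cardinal.aleph0_lt_mk_iff.mp (hcard ▸ Cardinal.aleph0_lt_aleph_one)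
  rw [hT]
  refine ⟨Set.not_countable_range_of_injective
    (ECond.ofFun_injective.comp (injective_of_pairwise_eventually_ne hed)), ?_⟩
  rintro F hF - hinf ⟨q, hq⟩
  refine hinf (((finite_setOf_ELe_ofFun q).image ECond.ofFun).subset fun p hp => ?_)
  obtain ⟨a, rfl⟩ := hF hp
  exact ⟨f a, hq _ hp, rfl⟩

end
end

section
/- The localization partial order 𝕃 does not have (ω₁,ω)-caliber. Concretely: if {f_α : α < ω₁} is a family of ω₁-many pairwise eventually different functions ℕ → ℕ, then T = {(⟨⟩, {f_α}) : α < ω₁} is an uncountable set of conditions in 𝕃 such that no countably infinite subset F ⊆ T has a common lower bound in 𝕃. -/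
noncomputable section

/-- A condition of the localization partial order `𝕃`: a pair `(σ, G)` where `σ` is a finite
sequence of finite sets of naturals with `|σ(i)| = i + 1`, and `G` is a finite set of functions
`ℕ → ℕ` with `|G| ≤ |σ| + 1`. -/
structure LCond where
  /-- the finite sequence of finite "slaloms" -/
  σ : List (Finset ℕ)
  /-- the finite set of functions to be localized -/
  G : Finset (ℕ → ℕ)
  hσ : ∀ i : ℕ, ∀ h : i < σ.length, (σ.get ⟨i, h⟩).card = i + 1
  hG : G.card ≤ σ.length + 1

/-- The order of `𝕃`: `(σ,G) ≤ (τ,H)` iff `σ ⊇ τ`, `G ⊇ H`, and `g(i) ∈ σ(i)` for every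
`g ∈ H` and every `i` with `|τ| ≤ i < |σ|`. -/
def LLe (p q : LCond) : Prop :=
  q.σ <+: p.σ ∧ q.G ⊆ p.G ∧
    ∀ g ∈ q.G, ∀ i : ℕ, q.σ.length ≤ i → ∀ h : i < p.σ.length, g i ∈ p.σ.get ⟨i, h⟩

/-- The condition `(⟨⟩, {f})` of `𝕃` with empty sequence and a single function. -/
def LCond.single (f : ℕ → ℕ) : LCond :=
  ⟨[], {f}, fun i h => absurd h (by simp), by simp⟩

/-- The localization partial order `𝕃` does not have `(ω₁, ω)`-caliber: given `ω₁`-many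
pairwise eventually different functions `f_a : ℕ → ℕ`, the set `T = {(⟨⟩, {f_a})}` is an
uncountable set of conditions of `𝕃` no countably infinite subset of which has a common
lower bound in `𝕃`. -/
theorem L_not_caliber_omega1_omega (ι : Type) (f : ι → ℕ → ℕ)
    (hcard : Cardinal.mk ι = Cardinal.aleph 1)
    (hed : ∀ a b : ι, a ≠ b → ∃ n : ℕ, ∀ k ≥ n, f a k ≠ f b k) :
    ¬ (Set.Countable {p : LCond | ∃ a : ι, p = LCond.single (f a)}) ∧
    ∀ F ⊆ {p : LCond | ∃ a : ι, p = LCond.single (f a)},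
      F.Countable → F.Infinite → ¬ ∃ q : LCond, ∀ p ∈ F, LLe q p := by
  have hinj : Function.Injective (fun a : ι => LCond.single (f a)) := by
    intro a b hab
    by_contra hne
    obtain ⟨n, hn⟩ := hed a b hne
    have hG : ({f a} : Finset (ℕ → ℕ)) = {f b} := congrArg LCond.G hab
    have : f a = f b := Finset.singleton_injective hG
    exact hn n le_rfl (by rw [this])
  constructor
  · intro hS
    have : Countable {p : LCond | ∃ a : ι, p = LCond.single (f a)} :=
      Set.countable_coe_iff.mpr hS
    have hci : Countable ι := by
      have : Function.Injective
          (fun a : ι => (⟨LCond.single (f a), ⟨a, rfl⟩⟩ :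
            {p : LCond | ∃ a : ι, p = LCond.single (f a)})) := by
        intro a b hab
        exact hinj (congrArg Subtype.val hab)
      exact Function.Injective.countable this
    have h1 : Cardinal.mk ι ≤ Cardinal.aleph0 := Cardinal.mk_le_aleph0
    rw [hcard] at h1
    exact absurd h1 (not_le.mpr Cardinal.aleph0_lt_aleph_one)
  · intro F hF _ hinf ⟨q, hq⟩
    have hsub : F ⊆ LCond.single '' ↑q.G := by
      intro p hp
      obtain ⟨a, rfl⟩ := hF hp
      refine ⟨f a, ?_, rfl⟩
      have := (hq _ hp).2.1
      exact this (Finset.mem_singleton_self _)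
    exact hinf ((q.G.finite_toSet.image _).subset hsub)

end
end

section
/- For every uncountable set T of conditions in the localization partial order 𝕃 there exist a finite sequence σ and an uncountable subset T′ ⊆ T such that every element of T′ has first coordinate σ, and for every ℓ ∈ ℕ there is a subset F ⊆ T′ of cardinality ℓ which has a common lower bound in 𝕃. -/
/-!
Pigeonhole on the stem gives an uncountable `T'` with common stem `s`, `n = |s|`. Given `ℓ`,
put `k = ℓ (n + 1)` and pigeonhole again, now on the sets of values `{g (n + i) | g ∈ G}`,
`i < k`: this yields `ℓ` conditions of `T'` that agree on these sets. Their functions number at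
most `ℓ (n + 1) = k`, and at each coordinate `n + i` they take only the at most `n + 1` values of
a single condition, so slaloms of size `n + i + 1` catch them all and extend `s` to a common
lower bound of length `n + k`.
-/

noncomputable section

theorem Set.exists_not_countable_inter_preimage_singleton {α β : Type*} [Countable β]
    (f : α → β) {S : Set α} (hS : ¬ S.Countable) : ∃ b, ¬ (S ∩ f ⁻¹' {b}).Countable := by
  by_contra! h
  refine hS ?_
  simpa [← Set.inter_iUnion, ← Set.preimage_iUnion, Set.iUnion_of_singleton] using
    Set.countable_iUnion h

namespace LCond

theorem exists_lowerBound_of_image_card_le (p : LCond) (G : Finset (ℕ → ℕ)) (k : ℕ)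
    (hG : G.card ≤ p.σ.length + k + 1)
    (himage : ∀ i < k, (G.image fun g => g (p.σ.length + i)).card ≤ p.σ.length + i + 1) :
    ∃ q : LCond, ∀ p' : LCond, p'.σ = p.σ → p'.G ⊆ G → LLe q p' := by
  set n := p.σ.length
  have hslalom : ∀ j : Fin k, ∃ C : Finset ℕ,
      G.image (fun g => g (n + j)) ⊆ C ∧ C.card = n + j + 1 :=
    fun j => Infinite.exists_superset_card_eq _ _ (himage j j.2)
  choose c hc using hslalom
  have hget : ∀ i (h : i < (p.σ ++ List.ofFn c).length) (hi : n ≤ i),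
      (p.σ ++ List.ofFn c).get ⟨i, h⟩ = c ⟨i - n, by simp at h; omega⟩ := by
    intro i h hi
    simp [List.getElem_append_right hi, n]
  refine ⟨⟨p.σ ++ List.ofFn c, G, fun i h => ?_, by simpa [n, add_right_comm] using hG⟩, ?_⟩
  · rcases lt_or_ge i n with hin | hin
    · simpa [List.getElem_append_left hin] using p.hσ i hin
    · simp only [hget i h hin, (hc _).2]
      omega
  · rintro p' hσ' hG'
    refine ⟨hσ'.symm ▸ List.prefix_append _ _, hG', fun g hg i hi h => ?_⟩
    rw [hσ'] at hi
    rw [hget i h hi]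
    have := (hc ⟨i - n, by simp at h; omega⟩).1
      (Finset.mem_image_of_mem (fun g => g (n + (i - n))) (hG' hg))
    rwa [Nat.add_sub_cancel' hi] at this

open Classical in
theorem exists_lowerBound_of_image_subset (p₀ : LCond) (t : Finset LCond) (k : ℕ)
    (hσ : ∀ p ∈ t, p.σ = p₀.σ) (hk : t.card * (p₀.σ.length + 1) ≤ k)
    (himage : ∀ p ∈ t, ∀ i < k,
      p.G.image (fun g => g (p₀.σ.length + i)) ⊆ p₀.G.image (fun g => g (p₀.σ.length + i))) :
    ∃ q : LCond, ∀ p ∈ t, LLe q p := by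
  set G := t.biUnion LCond.G
  have hG : G.card ≤ p₀.σ.length + k + 1 :=
    calc G.card ≤ ∑ p ∈ t, p.G.card := Finset.card_biUnion_le
      _ ≤ ∑ _p ∈ t, (p₀.σ.length + 1) := Finset.sum_le_sum fun p hp => hσ p hp ▸ p.hG
      _ = t.card * (p₀.σ.length + 1) := by rw [Finset.sum_const, smul_eq_mul]
      _ ≤ p₀.σ.length + k + 1 := by omega
  have hGimage : ∀ i < k, (G.image fun g => g (p₀.σ.length + i)).card ≤ p₀.σ.length + i + 1 := by
    intro i hi
    calc _ ≤ (p₀.G.image fun g => g (p₀.σ.length + i)).card := by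
          refine Finset.card_le_card ?_
          rw [Finset.biUnion_image]
          exact Finset.biUnion_subset.2 fun p hp => himage p hp i hi
      _ ≤ p₀.G.card := Finset.card_image_le
      _ ≤ p₀.σ.length + i + 1 := by have := p₀.hG; omega
  obtain ⟨q, hq⟩ := exists_lowerBound_of_image_card_le p₀ G k hG hGimage
  exact ⟨q, fun p hp => hq p (hσ p hp) (Finset.subset_biUnion_of_mem _ hp)⟩

end LCond

/-- For every uncountable set `T` of conditions of `𝕃` there are a finite sequence `s` and an
uncountable `T' ⊆ T` all of whose elements have first coordinate `s`, such that for every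
`ℓ` some `F ⊆ T'` of cardinality `ℓ` has a common lower bound in `𝕃`. -/
theorem L_uncountable_has_centered_refinement
    (T : Set LCond) (hunc : ¬ T.Countable) :
    ∃ (s : List (Finset ℕ)) (T' : Set LCond), T' ⊆ T ∧ ¬ T'.Countable ∧
      (∀ p ∈ T', p.σ = s) ∧
      ∀ ℓ : ℕ, ∃ F ⊆ T', F.Finite ∧ F.ncard = ℓ ∧ ∃ q : LCond, ∀ p ∈ F, LLe q p := by
  obtain ⟨s, hs⟩ := Set.exists_not_countable_inter_preimage_singleton LCond.σ hunc
  refine ⟨s, _, Set.inter_subset_left, hs, fun p hp => hp.2, fun ℓ => ?_⟩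
  set k := ℓ * (s.length + 1)
  obtain ⟨R, hR⟩ := Set.exists_not_countable_inter_preimage_singleton
    (fun p : LCond => fun i : Fin k => p.G.image fun g => g (s.length + i)) hs
  have hRinf : Set.Infinite _ := fun h => hR h.countable
  obtain ⟨p₀, ⟨-, hp₀σ⟩, hp₀R⟩ := hRinf.nonempty
  obtain ⟨t, hts, htcard⟩ := hRinf.exists_subset_card_eq ℓ
  obtain ⟨q, hq⟩ := LCond.exists_lowerBound_of_image_subset p₀ t k
    (fun p hp => (hts hp).1.2.trans hp₀σ.symm) (by rw [htcard, hp₀σ])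
    (fun p hp i hi => by
      rw [hp₀σ]; exact (congrFun ((hts hp).2.trans hp₀R.symm) ⟨i, hi⟩).subset)
  exact ⟨t, fun p hp => (hts hp).1, t.finite_toSet, by simp [htcard], q, hq⟩

end
end
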